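/- Let p, q be integers with 2 ≤ p < q, let γ ∈ (0, γ_{p,q}), and let a < A be the two positive roots of g(u) = 1 − u^{p−1} + γ u^{q−1}. Let N ≥ 1 and let ũ ∈ ℝ^N satisfy |ũ_n| = A for all n. Then all roots of the characteristic polynomial of the matrix product L̃⁺L̃⁻ are real; 0 is a simple root; exactly N₀(ũ) roots counted with multiplicity are negative; and exactly N − N₀(ũ) − 1 roots counted with multiplicity are positive. -/

import Mathlib

/-- The critical parameter `γ_{p,q} = ((p−1)/(q−1))·((q−p)/(q−1))^{(q−p)/(p−1)}`. -/
noncomputable def gammaCrit (p q : ℕ) : ℝ :=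
  (((p : ℝ) - 1) / ((q : ℝ) - 1)) *
    (((q : ℝ) - (p : ℝ)) / ((q : ℝ) - 1)) ^ (((q : ℝ) - (p : ℝ)) / ((p : ℝ) - 1))

/-- Extension of a vector `Fin N → ℝ` to `ℤ` by zero (0-indexed). -/
def extZ (N : ℕ) (ut : Fin N → ℝ) : ℤ → ℝ :=
  fun k => if h : 0 ≤ k ∧ k < (N : ℤ) then ut ⟨k.toNat, by omega⟩ else 0

/-- The `N×N` symmetric tridiagonal matrix `L̃⁻` with diagonal entries
`(ũ_{n−1} + ũ_{n+1})/ũ_n` (with the convention `ũ₀ = ũ_{N+1} = 0`) and `−1` on the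
sub- and super-diagonal. -/
noncomputable def Lminus (N : ℕ) (ut : Fin N → ℝ) : Matrix (Fin N) (Fin N) ℝ :=
  fun i j =>
    if i = j then (extZ N ut (((i : ℕ) : ℤ) - 1) + extZ N ut (((i : ℕ) : ℤ) + 1)) / ut i
    else if (((i : ℕ) : ℤ) - ((j : ℕ) : ℤ)).natAbs = 1 then -1 else 0

/-- The `N×N` diagonal matrix `L̃⁺` with entries `1 − p|ũ_n|^{p−1} + γ q |ũ_n|^{q−1}`. -/
noncomputable def Lplus (N : ℕ) (p q : ℕ) (γ : ℝ) (ut : Fin N → ℝ) :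
    Matrix (Fin N) (Fin N) ℝ :=
  Matrix.diagonal (fun n => 1 - (p : ℝ) * |ut n| ^ (p - 1) + γ * (q : ℝ) * |ut n| ^ (q - 1))

/-- The number `N₀(ũ)` of sign alternations of `ũ`. -/
noncomputable def nFlips (N : ℕ) (ut : Fin N → ℝ) : ℕ :=
  ((Finset.range (N - 1)).filter
    (fun i => (if h : i < N then ut ⟨i, h⟩ else 0) *
              (if h : i + 1 < N then ut ⟨i + 1, h⟩ else 0) < 0)).card

/-!
With `|ũ_n| = A` the matrix `L̃⁺` is the scalar `c = 1 − pA^{p−1} + γqA^{q−1}`, and Rolle's theorem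
applied to `u ↦ u^{p−1} − γu^{q−1}` between the roots `a < A` shows `c > 0`. The Jacobi matrix `L̃⁻`
factors as `Bᵀ diag(ũ_n ũ_{n+1}) B` with `B` upper bidiagonal (`B_{nn} = 1/ũ_n`,
`B_{n,n+1} = −1/ũ_{n+1}`), so `L̃⁺L̃⁻` is symmetric and congruent to `diag(c ũ_n ũ_{n+1})`
(where `ũ_{N+1} = 0`). By Sylvester's law of inertia its eigenvalues have the signs of these
entries: `N₀(ũ)` negative, one zero (the last one) and `N − N₀(ũ) − 1` positive.
-/

open Finset Matrix Polynomial Module Submodule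

lemma mul_pow_lt_of_pow_sub_mul_pow_eq {m n : ℕ} (hmn : m < n) {γ a A : ℝ} (hγ : 0 < γ)
    (ha : 0 < a) (haA : a < A) (h : a ^ m - γ * a ^ n = A ^ m - γ * A ^ n) :
    m * A ^ m < γ * n * A ^ n := by
  have hderiv : ∀ x : ℝ, HasDerivAt (fun u => u ^ m - γ * u ^ n)
      (m * x ^ (m - 1) - γ * (n * x ^ (n - 1))) x := fun x =>
    (hasDerivAt_pow m x).sub ((hasDerivAt_pow n x).const_mul γ)
  obtain ⟨ξ, ⟨haξ, hξA⟩, hξ⟩ := exists_hasDerivAt_eq_zero haA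
    (by fun_prop : Continuous fun u : ℝ => u ^ m - γ * u ^ n).continuousOn h fun x _ => hderiv x
  have hξ0 : 0 < ξ := ha.trans haξ
  have hA0 : 0 < A := hξ0.trans hξA
  have hcrit : m * ξ ^ m = γ * n * ξ ^ n := by
    have hmul : ∀ k : ℕ, ξ * (k * ξ ^ (k - 1)) = k * ξ ^ k := by
      rintro (_ | k) <;> simp [pow_succ]; ring
    linear_combination ξ * hξ - hmul m + γ * hmul n
  obtain ⟨k, rfl⟩ := Nat.exists_eq_add_of_lt hmn
  have hpow : ξ ^ (k + 1) < A ^ (k + 1) := pow_lt_pow_left₀ hξA hξ0.le (by omega)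
  have : (m * A ^ m) * ξ ^ m < (γ * (m + k + 1 : ℕ) * A ^ (m + k + 1)) * ξ ^ m := by
    calc (m * A ^ m) * ξ ^ m = γ * (m + k + 1 : ℕ) * A ^ m * ξ ^ m * ξ ^ (k + 1) := by
          rw [mul_comm (m : ℝ), mul_assoc, hcrit]; ring
      _ < γ * (m + k + 1 : ℕ) * A ^ m * ξ ^ m * A ^ (k + 1) := by gcongr
      _ = _ := by ring
  exact lt_of_mul_lt_mul_right this (by positivity)

lemma one_sub_mul_pow_add_mul_pow_pos {p q : ℕ} (hp : 1 ≤ p) (hpq : p < q) {γ a A : ℝ}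
    (hγ : 0 < γ) (ha : 0 < a) (haA : a < A) (hroota : 1 - a ^ (p - 1) + γ * a ^ (q - 1) = 0)
    (hrootA : 1 - A ^ (p - 1) + γ * A ^ (q - 1) = 0) :
    0 < 1 - p * A ^ (p - 1) + γ * q * A ^ (q - 1) := by
  have h := mul_pow_lt_of_pow_sub_mul_pow_eq (m := p - 1) (n := q - 1) (by omega) hγ ha haA
    (by linarith)
  rw [Nat.cast_sub hp, Nat.cast_sub (by omega), Nat.cast_one] at h
  linarith

section Inertia

variable {ι : Type*} [Fintype ι]

lemma card_filter_neg_add_card_filter_eq_zero_add_card_filter_pos (f : ι → ℝ) :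
    #{i | f i < 0} + #{i | f i = 0} + #{i | 0 < f i} = Fintype.card ι := by
  rw [card_filter, card_filter, card_filter, ← sum_add_distrib, ← sum_add_distrib, ← card_univ,
    card_eq_sum_ones]
  refine sum_congr rfl fun i _ => ?_
  rcases lt_trichotomy (f i) 0 with h | h | h
  · simp [h, h.ne, h.not_gt]
  · simp [h]
  · simp [h, h.ne', h.not_gt]

lemma mem_span_basisFun_image_iff {s : Set ι} {x : ι → ℝ} :
    x ∈ span ℝ (Pi.basisFun ℝ ι '' s) ↔ ∀ i, x i ≠ 0 → i ∈ s := by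
  rw [Basis.mem_span_image]
  simp [Set.subset_def]

lemma finrank_span_basisFun_image (s : Finset ι) :
    finrank ℝ (span ℝ (Pi.basisFun ℝ ι '' s)) = #s := by
  have := finrank_span_eq_card <|
    (Pi.basisFun ℝ ι).linearIndependent.comp (fun i : (s : Set ι) => (i : ι)) Subtype.val_injective
  rw [Set.range_comp, Subtype.range_coe] at this
  simpa using this

variable [DecidableEq ι]

lemma dotProduct_diagonal_mulVec_self (d x : ι → ℝ) :
    x ⬝ᵥ (diagonal d *ᵥ x) = ∑ i, d i * x i ^ 2 := by
  simp only [dotProduct, mulVec_diagonal]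
  exact Finset.sum_congr rfl fun i _ => by ring

lemma card_filter_neg_le_of_eq_transpose_mul_diagonal_mul {d₁ d₂ : ι → ℝ} {C : Matrix ι ι ℝ}
    (hC : Function.Injective C.mulVec) (h : diagonal d₁ = Cᵀ * diagonal d₂ * C) :
    #{i | d₁ i < 0} ≤ #{i | d₂ i < 0} := by
  -- `C` maps the coordinate subspace where `d₁ < 0` onto a subspace on which the `d₂`-form is
  -- negative definite, so it meets the coordinate subspace where `d₂ ≥ 0` trivially.
  set P := (span ℝ (Pi.basisFun ℝ ι '' ↑({i | d₁ i < 0} : Finset ι))).map C.mulVecLin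
  set W := span ℝ (Pi.basisFun ℝ ι '' ↑({i | ¬ d₂ i < 0} : Finset ι))
  have hneg : ∀ y ∈ P, y ≠ 0 → ∑ i, d₂ i * y i ^ 2 < 0 := by
    rintro _ ⟨x, hx, rfl⟩ hx0
    rw [SetLike.mem_coe, mem_span_basisFun_image_iff] at hx
    have hQ : ∑ i, d₂ i * (C *ᵥ x) i ^ 2 = ∑ i, d₁ i * x i ^ 2 := by
      rw [← dotProduct_diagonal_mulVec_self, ← dotProduct_diagonal_mulVec_self, h,
        ← mulVec_mulVec, ← mulVec_mulVec, dotProduct_mulVec x, vecMul_transpose]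
    obtain ⟨j, hj⟩ : ∃ j, x j ≠ 0 := by
      by_contra! hx'
      exact hx0 (by simp [show x = 0 from funext hx'])
    simp only [mulVecLin_apply, hQ]
    refine Finset.sum_neg' (fun i _ => ?_) ⟨j, mem_univ j, ?_⟩
    · by_cases hi : x i = 0
      · simp [hi]
      · have : d₁ i < 0 := by simpa using hx i hi
        nlinarith [sq_nonneg (x i)]
    · have : d₁ j < 0 := by simpa using hx j hj
      exact mul_neg_of_neg_of_pos this (by positivity)
  have hnonneg : ∀ y ∈ W, 0 ≤ ∑ i, d₂ i * y i ^ 2 := by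
    intro y hy
    rw [mem_span_basisFun_image_iff] at hy
    refine Finset.sum_nonneg fun i _ => ?_
    by_cases hi : y i = 0
    · simp [hi]
    · have : 0 ≤ d₂ i := by simpa using hy i hi
      positivity
  have hdisj : Disjoint P W := by
    rw [Submodule.disjoint_def]
    intro y hyP hyW
    by_contra hy
    exact (hneg y hyP hy).not_ge (hnonneg y hyW)
  have hP : finrank ℝ P = #{i | d₁ i < 0} := by
    rw [← (equivMapOfInjective C.mulVecLin hC _).finrank_eq, finrank_span_basisFun_image]
  have hW : finrank ℝ W + #{i | d₂ i < 0} = Fintype.card ι := by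
    rw [finrank_span_basisFun_image, add_comm, card_filter_add_card_filter_not, card_univ]
  have := Submodule.finrank_add_finrank_le_of_disjoint hdisj
  rw [finrank_fintype_fun_eq_card] at this
  omega

lemma card_filter_neg_eq_of_eq_transpose_mul_diagonal_mul {d₁ d₂ : ι → ℝ} {C : Matrix ι ι ℝ}
    (hC : IsUnit C) (h : diagonal d₁ = Cᵀ * diagonal d₂ * C) :
    #{i | d₁ i < 0} = #{i | d₂ i < 0} := by
  obtain ⟨C, rfl⟩ := hC
  have hT : (↑C⁻¹ : Matrix ι ι ℝ)ᵀ * (↑C)ᵀ = 1 := by rw [← transpose_mul, C.mul_inv, transpose_one]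
  have h' : diagonal d₂ = (↑C⁻¹ : Matrix ι ι ℝ)ᵀ * diagonal d₁ * (↑C⁻¹ : Matrix ι ι ℝ) :=
    calc diagonal d₂ = ((↑C⁻¹ : Matrix ι ι ℝ)ᵀ * (↑C)ᵀ) * diagonal d₂ * (↑C * ↑C⁻¹) := by
          rw [hT, C.mul_inv, one_mul, mul_one]
      _ = _ := by rw [h]; simp only [Matrix.mul_assoc]
  exact le_antisymm
    (card_filter_neg_le_of_eq_transpose_mul_diagonal_mul
      (mulVec_injective_iff_isUnit.mpr C.isUnit) h)
    (card_filter_neg_le_of_eq_transpose_mul_diagonal_mul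
      (mulVec_injective_iff_isUnit.mpr C⁻¹.isUnit) h')

lemma card_filter_pos_eq_of_eq_transpose_mul_diagonal_mul {d₁ d₂ : ι → ℝ} {C : Matrix ι ι ℝ}
    (hC : IsUnit C) (h : diagonal d₁ = Cᵀ * diagonal d₂ * C) :
    #{i | 0 < d₁ i} = #{i | 0 < d₂ i} := by
  have h' : diagonal (fun i => -d₁ i) = Cᵀ * diagonal (fun i => -d₂ i) * C := by
    rw [← diagonal_neg, ← diagonal_neg, h, Matrix.mul_neg, Matrix.neg_mul]
  simpa using card_filter_neg_eq_of_eq_transpose_mul_diagonal_mul hC h'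

namespace Matrix.IsHermitian

variable {M : Matrix ι ι ℝ}

lemma exists_diagonal_eigenvalues_eq_of_eq_transpose_mul_diagonal_mul (hM : M.IsHermitian)
    {B : Matrix ι ι ℝ} (hB : IsUnit B) {d : ι → ℝ} (h : M = Bᵀ * diagonal d * B) :
    ∃ C : Matrix ι ι ℝ, IsUnit C ∧ diagonal hM.eigenvalues = Cᵀ * diagonal d * C := by
  have hU : diagonal hM.eigenvalues = (hM.eigenvectorUnitary : Matrix ι ι ℝ)ᵀ * M *
      hM.eigenvectorUnitary := by
    simpa [RCLike.ofReal_real_eq_id, Unitary.conjStarAlgAut_apply, star_eq_conjTranspose]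
      using hM.conjStarAlgAut_star_eigenvectorUnitary.symm
  refine ⟨B * hM.eigenvectorUnitary, hB.mul Unitary.isUnit_coe, ?_⟩
  rw [hU]
  subst h
  rw [transpose_mul]
  simp only [Matrix.mul_assoc]

theorem inertia_eq_of_eq_transpose_mul_diagonal_mul (hM : M.IsHermitian) {B : Matrix ι ι ℝ}
    (hB : IsUnit B) {d : ι → ℝ} (h : M = Bᵀ * diagonal d * B) :
    #{i | hM.eigenvalues i < 0} = #{i | d i < 0} ∧ #{i | hM.eigenvalues i = 0} = #{i | d i = 0} ∧
      #{i | 0 < hM.eigenvalues i} = #{i | 0 < d i} := by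
  obtain ⟨C, hC, hdiag⟩ := hM.exists_diagonal_eigenvalues_eq_of_eq_transpose_mul_diagonal_mul hB h
  have hneg := card_filter_neg_eq_of_eq_transpose_mul_diagonal_mul hC hdiag
  have hpos := card_filter_pos_eq_of_eq_transpose_mul_diagonal_mul hC hdiag
  have := card_filter_neg_add_card_filter_eq_zero_add_card_filter_pos hM.eigenvalues
  have := card_filter_neg_add_card_filter_eq_zero_add_card_filter_pos d
  omega

lemma card_filter_roots_charpoly (hM : M.IsHermitian) (P : ℝ → Prop) [DecidablePred P] :
    (M.charpoly.roots.filter P).card = #{i | P (hM.eigenvalues i)} := by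
  rw [hM.roots_charpoly_eq_eigenvalues, RCLike.ofReal_real_eq_id, Function.id_comp,
    Multiset.filter_map, Multiset.card_map]
  rfl

lemma im_eq_zero_of_mem_roots_charpoly_map (hM : M.IsHermitian) {z : ℂ}
    (hz : z ∈ (M.charpoly.map (algebraMap ℝ ℂ)).roots) : z.im = 0 := by
  rw [hM.splits_charpoly.roots_map, Multiset.mem_map] at hz
  obtain ⟨x, -, rfl⟩ := hz
  exact Complex.ofReal_im x

end Matrix.IsHermitian

lemma isHermitian_transpose_mul_diagonal_mul (B : Matrix ι ι ℝ) (d : ι → ℝ) :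
    (Bᵀ * diagonal d * B).IsHermitian := by
  rw [IsHermitian, conjTranspose_eq_transpose_of_trivial]
  simp only [transpose_mul, transpose_transpose, diagonal_transpose, Matrix.mul_assoc]

end Inertia

section Factor

variable {N : ℕ} (ut : Fin N → ℝ)

lemma extZ_natCast (i : ℕ) : extZ N ut i = if h : i < N then ut ⟨i, h⟩ else 0 := by
  by_cases h : i < N
  · rw [extZ, dif_pos ⟨by positivity, by exact_mod_cast h⟩, dif_pos h]
    rfl
  · rw [extZ, dif_neg (by omega), dif_neg h]

lemma extZ_val (n : Fin N) : extZ N ut (n : ℕ) = ut n := by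
  rw [extZ_natCast, dif_pos n.isLt]

lemma extZ_val_sub_one (n : Fin N) :
    extZ N ut ((n : ℕ) - 1 : ℤ) = if 0 < (n : ℕ) then extZ N ut ((n : ℕ) - 1 : ℕ) else 0 := by
  split_ifs with h
  · rw [show ((n : ℕ) - 1 : ℤ) = ((n - 1 : ℕ) : ℤ) by omega]
  · rw [extZ, dif_neg (by omega)]

noncomputable def LminusFactor : Matrix (Fin N) (Fin N) ℝ :=
  fun k m => if (m : ℕ) = k then (ut m)⁻¹ else if (m : ℕ) = k + 1 then -(ut m)⁻¹ else 0

noncomputable def neighborProd (n : Fin N) : ℝ := extZ N ut (n : ℕ) * extZ N ut ((n : ℕ) + 1 : ℕ)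

lemma sum_LminusFactor_mul (F : ℕ → ℝ) (i : Fin N) :
    ∑ k, LminusFactor ut k i * F k = (F i - if 0 < (i : ℕ) then F (i - 1) else 0) / ut i := by
  have hsplit : ∀ k, LminusFactor ut k i * F k =
      (if k = i then F k / ut i else 0) - (if (i : ℕ) = k + 1 then F k / ut i else 0) := by
    intro k
    simp only [LminusFactor, Fin.ext_iff]
    split_ifs <;> first | omega | ring
  rw [Finset.sum_congr rfl fun k _ => hsplit k, sum_sub_distrib, sum_ite_eq', if_pos (mem_univ _),
    sub_div]
  congr 1
  split_ifs with h
  · rw [Finset.sum_eq_single ⟨i - 1, by omega⟩, if_pos (by simp; omega)]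
    · intro k _ hk
      exact if_neg fun h' => hk (Fin.ext (by simp; omega))
    · simp
  · rw [zero_div]
    exact Finset.sum_eq_zero fun k _ => if_neg (by omega)

lemma Lminus_eq_transpose_mul_diagonal_mul (hut : ∀ n, ut n ≠ 0) :
    Lminus N ut = (LminusFactor ut)ᵀ * diagonal (neighborProd ut) * LminusFactor ut := by
  ext i j
  have hB : ∀ k : Fin N, LminusFactor ut k j = if (j : ℕ) = k then (extZ N ut (j : ℕ))⁻¹
      else if (j : ℕ) = k + 1 then -(extZ N ut (j : ℕ))⁻¹ else 0 := by
    intro k; simp only [LminusFactor, extZ_val]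
  rw [mul_apply]
  simp only [mul_diagonal, transpose_apply, mul_assoc, neighborProd, hB]
  rw [sum_LminusFactor_mul ut fun n => extZ N ut n * (extZ N ut (n + 1 : ℕ) *
    if (j : ℕ) = n then (extZ N ut (j : ℕ))⁻¹
    else if (j : ℕ) = n + 1 then -(extZ N ut (j : ℕ))⁻¹ else 0)]
  have hi : extZ N ut (i : ℕ) ≠ 0 := by rw [extZ_val]; exact hut i
  have hj : extZ N ut (j : ℕ) ≠ 0 := by rw [extZ_val]; exact hut j
  simp only [Lminus, ← extZ_val ut i, extZ_val_sub_one, Fin.ext_iff]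
  rw [show ((i : ℕ) : ℤ) + 1 = ((i + 1 : ℕ) : ℤ) by push_cast; ring]
  generalize (i : ℕ) = a at *
  generalize (j : ℕ) = b at *
  rcases (by omega : b = a ∨ b = a + 1 ∨ a = b + 1 ∨ (b ≠ a ∧ b ≠ a + 1 ∧ a ≠ b + 1))
    with rfl | rfl | rfl | ⟨h₁, h₂, h₃⟩
  all_goals try simp only [Nat.add_sub_cancel]
  all_goals split_ifs <;> first
    | omega
    | (rw [Nat.sub_add_cancel ‹0 < _›]; field_simp; ring)
    | (field_simp; ring)

lemma LminusFactor_isUnit (hut : ∀ n, ut n ≠ 0) : IsUnit (LminusFactor ut) := by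
  rw [isUnit_iff_isUnit_det, det_of_isUpperTriangular, isUnit_iff_ne_zero]
  · exact prod_ne_zero_iff.mpr fun n _ => by simp [LminusFactor, hut n]
  · intro i j hij
    simp only [LminusFactor, id, Fin.lt_def] at hij ⊢
    rw [if_neg (by omega), if_neg (by omega)]

lemma neighborProd_eq_zero_iff (hut : ∀ n, ut n ≠ 0) (n : Fin N) :
    neighborProd ut n = 0 ↔ (n : ℕ) + 1 = N := by
  rw [neighborProd, extZ_val, extZ_natCast, mul_eq_zero]
  split_ifs <;> simp [hut] <;> omega

lemma card_filter_neighborProd_eq_zero (hN : 1 ≤ N) (hut : ∀ n, ut n ≠ 0) :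
    #{n | neighborProd ut n = 0} = 1 := by
  rw [card_eq_one]
  refine ⟨⟨N - 1, by omega⟩, ?_⟩
  ext n
  simp only [mem_filter, mem_univ, true_and, mem_singleton, neighborProd_eq_zero_iff ut hut,
    Fin.ext_iff]
  omega

lemma card_filter_neighborProd_neg : #{n | neighborProd ut n < 0} = nFlips N ut := by
  rw [nFlips, card_filter, card_filter]
  simp only [← extZ_natCast]
  refine (Fin.sum_univ_eq_sum_range
    (fun i => if extZ N ut i * extZ N ut (i + 1 : ℕ) < 0 then 1 else 0) N).trans ?_
  cases N with
  | zero => rfl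
  | succ n => rw [sum_range_succ, extZ_natCast ut (n + 1), dif_neg (by omega), mul_zero,
      if_neg (lt_irrefl 0), add_zero, Nat.add_sub_cancel]

end Factor

lemma Lplus_eq_smul_one {N p q : ℕ} {γ A : ℝ} {ut : Fin N → ℝ} (hut : ∀ n, |ut n| = A) :
    Lplus N p q γ ut = (1 - p * A ^ (p - 1) + γ * q * A ^ (q - 1)) • 1 := by
  rw [Lplus, smul_one_eq_diagonal]
  simp only [hut]

theorem LplusLminus_spectrum_allA_general (p q : ℕ) (hp : 2 ≤ p) (hpq : p < q)
    (γ : ℝ) (hγ0 : 0 < γ)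
    (a A : ℝ) (ha : 0 < a) (haA : a < A)
    (hroota : 1 - a ^ (p - 1) + γ * a ^ (q - 1) = 0)
    (hrootA : 1 - A ^ (p - 1) + γ * A ^ (q - 1) = 0)
    (N : ℕ) (hN : 1 ≤ N) (ut : Fin N → ℝ) (hut : ∀ n, |ut n| = A) :
    (∀ z ∈ ((Lplus N p q γ ut * Lminus N ut).charpoly.map (algebraMap ℝ ℂ)).roots,
      z.im = 0) ∧
    (Lplus N p q γ ut * Lminus N ut).charpoly.rootMultiplicity 0 = 1 ∧
    (((Lplus N p q γ ut * Lminus N ut).charpoly.roots.filter (fun x => x < 0)).card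
      = nFlips N ut) ∧
    (((Lplus N p q γ ut * Lminus N ut).charpoly.roots.filter (fun x => 0 < x)).card
      = N - nFlips N ut - 1) := by
  have hut₀ : ∀ n, ut n ≠ 0 := fun n h => (ha.trans haA).ne (by simpa [h] using hut n)
  set c := 1 - p * A ^ (p - 1) + γ * q * A ^ (q - 1)
  have hc : 0 < c := one_sub_mul_pow_add_mul_pow_pos (by omega) hpq hγ0 ha haA hroota hrootA
  set d := c • neighborProd ut
  have hfac :
      Lplus N p q γ ut * Lminus N ut = (LminusFactor ut)ᵀ * diagonal d * LminusFactor ut := by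
    rw [Lplus_eq_smul_one hut, Lminus_eq_transpose_mul_diagonal_mul ut hut₀, smul_one_mul,
      diagonal_smul, Matrix.mul_smul, Matrix.smul_mul]
  have hM : (Lplus N p q γ ut * Lminus N ut).IsHermitian :=
    hfac ▸ isHermitian_transpose_mul_diagonal_mul _ d
  obtain ⟨hneg, hzero, hpos⟩ :=
    hM.inertia_eq_of_eq_transpose_mul_diagonal_mul (LminusFactor_isUnit ut hut₀) hfac
  have hdneg : #{n | d n < 0} = nFlips N ut := by
    simpa [d, mul_neg_iff, hc, hc.not_gt] using card_filter_neighborProd_neg ut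
  have hdzero : #{n | d n = 0} = 1 := by
    simpa [d, hc.ne'] using card_filter_neighborProd_eq_zero ut hN hut₀
  have hsplit := card_filter_neg_add_card_filter_eq_zero_add_card_filter_pos d
  rw [Fintype.card_fin] at hsplit
  refine ⟨fun z hz => hM.im_eq_zero_of_mem_roots_charpoly_map hz, ?_, ?_, ?_⟩
  · rw [← count_roots, Multiset.count_eq_card_filter_eq, hM.card_filter_roots_charpoly]
    simp only [@eq_comm ℝ 0, hzero, hdzero]
  · rw [hM.card_filter_roots_charpoly, hneg, hdneg]
  · rw [hM.card_filter_roots_charpoly, hpos]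
    omega

/-- For a code with `|ũ_n| = A` for all `n`, all roots of the characteristic polynomial
of `L̃⁺L̃⁻` are real; `0` is a simple root; exactly `N₀(ũ)` roots are negative and
exactly `N − N₀(ũ) − 1` roots are positive, counted with multiplicity. -/
theorem LplusLminus_spectrum_allA (p q : ℕ) (hp : 2 ≤ p) (hpq : p < q)
    (γ : ℝ) (hγ0 : 0 < γ) (hγ : γ < gammaCrit p q)
    (a A : ℝ) (ha : 0 < a) (haA : a < A)
    (hroota : 1 - a ^ (p - 1) + γ * a ^ (q - 1) = 0)
    (hrootA : 1 - A ^ (p - 1) + γ * A ^ (q - 1) = 0)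
    (N : ℕ) (hN : 1 ≤ N) (ut : Fin N → ℝ) (hut : ∀ n, |ut n| = A) :
    (∀ z ∈ ((Lplus N p q γ ut * Lminus N ut).charpoly.map (algebraMap ℝ ℂ)).roots,
      z.im = 0) ∧
    (Lplus N p q γ ut * Lminus N ut).charpoly.rootMultiplicity 0 = 1 ∧
    (((Lplus N p q γ ut * Lminus N ut).charpoly.roots.filter (fun x => x < 0)).card
      = nFlips N ut) ∧
    (((Lplus N p q γ ut * Lminus N ut).charpoly.roots.filter (fun x => 0 < x)).card
      = N - nFlips N ut - 1) :=
  LplusLminus_spectrum_allA_general p q hp hpq γ hγ0 a A ha haA hroota hrootA N hN ut hut
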